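/- arXiv:1204.5981 — 9 statements merged into one kernel-verified Lean document; each statement's English description precedes it below -/
import Mathlib

section
/- For finite relational structures A and B, the following are equivalent: (i) every primitive positive sentence true in A is true in B; (ii) there exists a homomorphism from A to B; (iii) B satisfies the canonical conjunctive query of A (the existential closure of the conjunction of all positive atomic facts of A, with a variable per element of A). -/
/-- A relational signature: a type of relation symbols with arities. -/
structure Signature where
  symb : Type
  ar : symb → ℕ

/-- A relational structure over signature `σ` with domain `α`. -/
structure Struc (σ : Signature) (α : Type) where
  rel : ∀ s, (Fin (σ.ar s) → α) → Prop

/-- A homomorphism between relational structures. -/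
def IsHom {σ : Signature} {α β : Type} (A : Struc σ α) (B : Struc σ β)
    (h : α → β) : Prop :=
  ∀ s t, A.rel s t → B.rel s (fun i => h (t i))

/-- Primitive positive formulas (relational atoms, conjunction — including the
empty conjunction `top` — and existential quantification), with `n` free variables. -/
inductive PP (σ : Signature) : ℕ → Type
  | top {n} : PP σ n
  | atom {n} (s : σ.symb) (ts : Fin (σ.ar s) → Fin n) : PP σ n
  | and {n} : PP σ n → PP σ n → PP σ n
  | ex {n} : PP σ (n + 1) → PP σ n

/-- Satisfaction of a primitive positive formula under a valuation. -/
def PP.Sat {σ : Signature} {α : Type} (A : Struc σ α) :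
    ∀ {n}, PP σ n → (Fin n → α) → Prop
  | _, .top, _ => True
  | _, .atom s ts, v => A.rel s (fun i => v (ts i))
  | _, .and φ ψ, v => φ.Sat A v ∧ ψ.Sat A v
  | _, .ex φ, v => ∃ a, φ.Sat A (Fin.cons a v)

/-- Conjunction of a list of pp formulas. -/
def PP.conjList {σ : Signature} {n : ℕ} : List (PP σ n) → PP σ n
  | [] => .top
  | φ :: l => .and φ (conjList l)

/-- Existential closure of a pp formula. -/
def PP.exs {σ : Signature} : ∀ {n}, PP σ n → PP σ 0
  | 0, φ => φ
  | _ + 1, φ => exs φ.ex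

/-- The canonical conjunctive query of a finite structure `A`: the existential
closure of the conjunction of all positive atomic facts of `A`, one variable per
element of `A` (via the enumeration `e`). -/
noncomputable def canonicalQuery {σ : Signature} [Fintype σ.symb] [DecidableEq σ.symb]
    {α : Type} [Fintype α] [DecidableEq α]
    (A : Struc σ α) [∀ s t, Decidable (A.rel s t)] (e : α ≃ Fin (Fintype.card α)) :
    PP σ 0 :=
  PP.exs (PP.conjList
    (((Finset.univ.filter
        (fun p : Σ s : σ.symb, Fin (σ.ar s) → α => A.rel p.1 p.2)).toList).map
      (fun p => PP.atom p.1 (fun i => e (p.2 i)))))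

/-! Homomorphisms preserve primitive positive formulas, so (ii) gives (i). Conversely, a valuation
satisfying the canonical query of `A` in a structure `C` is, read through `e`, exactly a homomorphism
`A → C`; this gives (ii) ⟺ (iii), and (i) ⟹ (iii) because the identity shows that `A` satisfies its
own canonical query. -/

namespace PP

variable {σ : Signature} {α : Type} (A : Struc σ α)

lemma sat_conjList {n : ℕ} (l : List (PP σ n)) (v : Fin n → α) :
    (conjList l).Sat A v ↔ ∀ φ ∈ l, φ.Sat A v := by
  induction l with
  | nil => simp [conjList, Sat]
  | cons φ l ih => simp [conjList, Sat, ih]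

lemma sat_exs {n : ℕ} (φ : PP σ n) (v₀ : Fin 0 → α) :
    φ.exs.Sat A v₀ ↔ ∃ v : Fin n → α, φ.Sat A v := by
  induction n with
  | zero => exact ⟨fun h => ⟨v₀, h⟩, fun ⟨v, h⟩ => Subsingleton.elim v v₀ ▸ h⟩
  | succ n ih =>
    rw [show φ.exs = φ.ex.exs from rfl, ih, Fin.exists_fin_succ_pi, exists_comm]
    rfl

variable {A} {β : Type} {B : Struc σ β} {h : α → β}

lemma Sat.of_isHom (hh : IsHom A B h) {n : ℕ} {φ : PP σ n} {v : Fin n → α}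
    (hφ : φ.Sat A v) : φ.Sat B (h ∘ v) := by
  induction φ with
  | top => trivial
  | atom s ts => exact hh s _ hφ
  | and φ ψ ihφ ihψ => exact ⟨ihφ hφ.1, ihψ hφ.2⟩
  | ex φ ih =>
    obtain ⟨a, ha⟩ := hφ
    exact ⟨h a, Fin.comp_cons h a v ▸ ih ha⟩

lemma Sat.sentence_of_isHom (hh : IsHom A B h) {φ : PP σ 0} (hφ : φ.Sat A Fin.elim0) :
    φ.Sat B Fin.elim0 :=
  Subsingleton.elim (h ∘ Fin.elim0) Fin.elim0 ▸ hφ.of_isHom hh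

end PP

lemma sat_canonicalQuery_iff_exists_isHom {σ : Signature} [Fintype σ.symb] [DecidableEq σ.symb]
    {α γ : Type} [Fintype α] [DecidableEq α] (A : Struc σ α) (C : Struc σ γ)
    [∀ s t, Decidable (A.rel s t)] (e : α ≃ Fin (Fintype.card α)) :
    (canonicalQuery A e).Sat C Fin.elim0 ↔ ∃ h : α → γ, IsHom A C h := by
  have sat_iff_valuation : (∃ w : Fin (Fintype.card α) → γ, ∀ s t, A.rel s t → C.rel s (w ∘ e ∘ t)) ↔
      (canonicalQuery A e).Sat C Fin.elim0 := by
    simp only [canonicalQuery, PP.sat_exs, PP.sat_conjList, List.forall_mem_map,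
      Finset.mem_toList, Finset.mem_filter, Finset.mem_univ, true_and, Sigma.forall]
    rfl
  rw [← sat_iff_valuation]
  constructor
  · rintro ⟨w, hw⟩
    exact ⟨w ∘ e, hw⟩
  · rintro ⟨h, hh⟩
    refine ⟨h ∘ e.symm, fun s t hst => ?_⟩
    simpa [Function.comp_def] using hh s t hst

lemma sat_canonicalQuery_self {σ : Signature} [Fintype σ.symb] [DecidableEq σ.symb]
    {α : Type} [Fintype α] [DecidableEq α] (A : Struc σ α) [∀ s t, Decidable (A.rel s t)]
    (e : α ≃ Fin (Fintype.card α)) : (canonicalQuery A e).Sat A Fin.elim0 :=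
  (sat_canonicalQuery_iff_exists_isHom A A e).2 ⟨id, fun _ _ h => h⟩

theorem pp_containment_tfae_general {σ : Signature} [Fintype σ.symb] [DecidableEq σ.symb]
    {α β : Type} [Fintype α] [DecidableEq α]
    (A : Struc σ α) (B : Struc σ β) [∀ s t, Decidable (A.rel s t)]
    (e : α ≃ Fin (Fintype.card α)) :
    ((∀ φ : PP σ 0, φ.Sat A Fin.elim0 → φ.Sat B Fin.elim0) ↔
      (∃ h : α → β, IsHom A B h)) ∧
    ((∃ h : α → β, IsHom A B h) ↔ (canonicalQuery A e).Sat B Fin.elim0) := by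
  have hom_iff_query := (sat_canonicalQuery_iff_exists_isHom A B e).symm
  refine ⟨⟨fun hpp => ?_, fun ⟨h, hh⟩ φ hφ => hφ.sentence_of_isHom hh⟩, hom_iff_query⟩
  exact hom_iff_query.2 (hpp _ (sat_canonicalQuery_self A e))

/-- For finite structures `A`, `B`, the following are equivalent:
(i) every pp sentence true in `A` is true in `B`; (ii) there is a homomorphism
`A → B`; (iii) `B` satisfies the canonical conjunctive query of `A`. -/
theorem pp_containment_tfae {σ : Signature} [Fintype σ.symb] [DecidableEq σ.symb]
    {α β : Type} [Fintype α] [DecidableEq α] [Fintype β]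
    (A : Struc σ α) (B : Struc σ β) [∀ s t, Decidable (A.rel s t)]
    (e : α ≃ Fin (Fintype.card α)) :
    ((∀ φ : PP σ 0, φ.Sat A Fin.elim0 → φ.Sat B Fin.elim0) ↔
      (∃ h : α → β, IsHom A B h)) ∧
    ((∃ h : α → β, IsHom A B h) ↔ (canonicalQuery A e).Sat B Fin.elim0) :=
  pp_containment_tfae_general A B e
end

section
/- Any two cores of the same finite relational structure are isomorphic. -/
/-- The substructure of `A` induced on a subset `S` of its domain. -/
def induced {σ : Signature} {α : Type} (A : Struc σ α) (S : Set α) : Struc σ S :=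
  ⟨fun s t => A.rel s (fun i => (t i : α))⟩

/-- Homomorphic equivalence: homomorphisms exist in both directions. -/
def HomEquiv {σ : Signature} {α β : Type} (A : Struc σ α) (B : Struc σ β) : Prop :=
  (∃ h : α → β, IsHom A B h) ∧ (∃ g : β → α, IsHom B A g)

/-- `S` induces a core of `A`: a minimal (w.r.t. inclusion) induced substructure
homomorphically equivalent to `A`. -/
def IsCore {σ : Signature} {α : Type} (A : Struc σ α) (S : Set α) : Prop :=
  HomEquiv A (induced A S) ∧ ∀ T : Set α, T ⊂ S → ¬ HomEquiv A (induced A T)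

/-!
Composing the homomorphisms `S → A → S'` and `S' → A → S` gives `f : S → S'` and
`f' : S' → S`. By minimality, an endomorphism of a core has image inducing a homomorphically
equivalent substructure, so it is onto, hence (finiteness) a permutation. Thus `f' ∘ f` and
`f ∘ f'` are permutations, which makes `f` a bijection. A permutation of a finite set has its
inverse among its powers, so the inverse of an endomorphic permutation is again a homomorphism,
and `f⁻¹ = (f' ∘ f)⁻¹ ∘ f'` is a homomorphism as well.
-/

section
variable {σ : Signature} {α β γ : Type} {A : Struc σ α} {B : Struc σ β} {C : Struc σ γ}

theorem IsHom.comp {g : β → γ} {f : α → β} (hg : IsHom B C g) (hf : IsHom A B f) :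
    IsHom A C (g ∘ f) :=
  fun s t ht => hg s _ (hf s t ht)

theorem isHom_val (S : Set α) : IsHom (induced A S) A Subtype.val :=
  fun _ _ ht => ht

theorem isHom_inclusion {S T : Set α} (hST : S ⊆ T) :
    IsHom (induced A S) (induced A T) (Set.inclusion hST) :=
  fun _ _ ht => ht

theorem IsHom.codRestrict {f : β → α} (hf : IsHom B A f) (S : Set α) (hS : ∀ b, f b ∈ S) :
    IsHom B (induced A S) (Set.codRestrict f S hS) :=
  hf

theorem IsHom.perm_pow {e : Equiv.Perm α} (he : IsHom A A e) (n : ℕ) :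
    IsHom A A ⇑(e ^ n) := by
  induction n with
  | zero => exact fun _ _ ht => ht
  | succ n ih => rw [pow_succ', Equiv.Perm.coe_mul]; exact he.comp ih

theorem IsHom.perm_symm [Finite α] {e : Equiv.Perm α} (he : IsHom A A e) :
    IsHom A A e.symm := by
  obtain ⟨n, hn⟩ : e⁻¹ ∈ Submonoid.powers e :=
    mem_powers_iff_mem_zpowers.2 (inv_mem (Subgroup.mem_zpowers e))
  rw [← Equiv.Perm.inv_def, ← hn]
  exact he.perm_pow n

theorem IsHom.equiv_symm_of_bijective_comp [Finite α] {e : α ≃ β} {f : β → α}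
    (hf : IsHom B A f) (hfe : IsHom A A (f ∘ e)) (hbij : Function.Bijective (f ∘ e)) :
    IsHom B A e.symm := by
  set p := Equiv.ofBijective _ hbij
  have he_symm : ⇑e.symm = p.symm ∘ f := by
    funext y
    apply p.injective
    simp [p]
  rw [he_symm]
  exact (hfe.perm_symm (e := p)).comp hf

theorem IsCore.surjective_of_isHom {S : Set α} (hS : IsCore A S) {e : S → S}
    (he : IsHom (induced A S) (induced A S) e) : Function.Surjective e := by
  obtain ⟨⟨h, hh⟩, ⟨g, hg⟩⟩ := hS.1
  set T : Set α := Set.range fun x => (e x : α)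
  have hTS : T ⊆ S := by rintro _ ⟨x, rfl⟩; exact (e x).2
  have hT : HomEquiv A (induced A T) :=
    ⟨⟨_, ((isHom_val S).comp (he.comp hh)).codRestrict T fun a => ⟨h a, rfl⟩⟩,
      ⟨_, hg.comp (isHom_inclusion hTS)⟩⟩
  have hST : S ⊆ T := by
    by_contra hST
    exact hS.2 T (ssubset_of_subset_not_subset hTS hST) hT
  intro x
  obtain ⟨y, hy⟩ := hST x.2
  exact ⟨y, Subtype.ext hy⟩

theorem IsCore.bijective_of_isHom [Finite α] {S : Set α} (hS : IsCore A S) {e : S → S}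
    (he : IsHom (induced A S) (induced A S) e) : Function.Bijective e :=
  have hsurj := hS.surjective_of_isHom he
  ⟨Finite.injective_iff_surjective.2 hsurj, hsurj⟩

theorem HomEquiv.exists_isHom_induced {S T : Set α} (hS : HomEquiv A (induced A S))
    (hT : HomEquiv A (induced A T)) : ∃ f : S → T, IsHom (induced A S) (induced A T) f :=
  let ⟨_, hh⟩ := hT.1
  let ⟨_, hg⟩ := hS.2
  ⟨_, hh.comp hg⟩

end

/-- Any two cores of the same finite relational structure are
isomorphic. -/
theorem cores_isomorphic {σ : Signature} {α : Type} [Finite α] (A : Struc σ α)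
    (S S' : Set α) (hS : IsCore A S) (hS' : IsCore A S') :
    ∃ e : S ≃ S', IsHom (induced A S) (induced A S') e ∧
      IsHom (induced A S') (induced A S) e.symm := by
  obtain ⟨f, hf⟩ := hS.1.exists_isHom_induced hS'.1
  obtain ⟨f', hf'⟩ := hS'.1.exists_isHom_induced hS.1
  have hf'f := hS.bijective_of_isHom (hf'.comp hf)
  have hff' := hS'.bijective_of_isHom (hf.comp hf')
  refine ⟨Equiv.ofBijective f ⟨hf'f.1.of_comp, hff'.2.of_comp⟩, hf, ?_⟩
  exact hf'.equiv_symm_of_bijective_comp (hf'.comp hf) hf'f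
end

section
/- If there exists a surjective hypermorphism from a finite relational structure A to a finite relational structure B, then every sentence of positive equality-free first-order logic (using only ∃, ∀, ∧, ∨ and relational atoms) true in A is also true in B. -/
/-- Positive equality-free first-order formulas (relational atoms, ∧, ∨ — including
the empty conjunction `top` and empty disjunction `bot` — ∃ and ∀), `n` free variables. -/
inductive PEF (σ : Signature) : ℕ → Type
  | top {n} : PEF σ n
  | bot {n} : PEF σ n
  | atom {n} (s : σ.symb) (ts : Fin (σ.ar s) → Fin n) : PEF σ n
  | and {n} : PEF σ n → PEF σ n → PEF σ n
  | or {n} : PEF σ n → PEF σ n → PEF σ n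
  | ex {n} : PEF σ (n + 1) → PEF σ n
  | all {n} : PEF σ (n + 1) → PEF σ n

/-- Satisfaction of a positive equality-free formula under a valuation. -/
def PEF.Sat {σ : Signature} {α : Type} (A : Struc σ α) :
    ∀ {n}, PEF σ n → (Fin n → α) → Prop
  | _, .top, _ => True
  | _, .bot, _ => False
  | _, .atom s ts, v => A.rel s (fun i => v (ts i))
  | _, .and φ ψ, v => φ.Sat A v ∧ ψ.Sat A v
  | _, .or φ ψ, v => φ.Sat A v ∨ ψ.Sat A v
  | _, .ex φ, v => ∃ a, φ.Sat A (Fin.cons a v)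
  | _, .all φ, v => ∀ a, φ.Sat A (Fin.cons a v)

/-- A surjective hypermorphism from `A` to `B`: a total, surjective, preserving
multivalued map from the domain of `A` to subsets of the domain of `B`. -/
structure SurjHyper {σ : Signature} {α β : Type} (A : Struc σ α) (B : Struc σ β)
    (f : α → Set β) : Prop where
  total : ∀ a, (f a).Nonempty
  surj : ∀ b, ∃ a, b ∈ f a
  pres : ∀ s (t : Fin (σ.ar s) → α) (u : Fin (σ.ar s) → β),
    A.rel s t → (∀ i, u i ∈ f (t i)) → B.rel s u

/-! Induct on the formula, carrying valuations `v` in `A` and `w` in `B` with `w i ∈ f (v i)`: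
atoms are handled by preservation, an `∃`-witness `a` is replaced by any element of `f a`
(totality), and a `∀` over `B` is reduced to one over `A` by choosing preimages (surjectivity). -/

theorem Fin.cons_mem_cons {α β : Type} {f : α → Set β} {n : ℕ} {v : Fin n → α} {w : Fin n → β}
    (hvw : ∀ i, w i ∈ f (v i)) {a : α} {b : β} (hab : b ∈ f a) :
    ∀ i, (Fin.cons b w : Fin (n + 1) → β) i ∈ f ((Fin.cons a v : Fin (n + 1) → α) i) :=
  Fin.cases hab hvw

namespace SurjHyper

variable {σ : Signature} {α β : Type} {A : Struc σ α} {B : Struc σ β} {f : α → Set β}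

theorem sat_of_sat (hf : SurjHyper A B f) {n : ℕ} (φ : PEF σ n) {v : Fin n → α} {w : Fin n → β}
    (hvw : ∀ i, w i ∈ f (v i)) : φ.Sat A v → φ.Sat B w := by
  induction φ with
  | top => exact id
  | bot => exact id
  | atom s ts => exact fun h => hf.pres s _ _ h fun i => hvw (ts i)
  | and φ ψ ihφ ihψ => exact And.imp (ihφ hvw) (ihψ hvw)
  | or φ ψ ihφ ihψ => exact Or.imp (ihφ hvw) (ihψ hvw)
  | ex φ ih =>
    rintro ⟨a, ha⟩
    obtain ⟨b, hb⟩ := hf.total a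
    exact ⟨b, ih (Fin.cons_mem_cons hvw hb) ha⟩
  | all φ ih =>
    intro h b
    obtain ⟨a, hb⟩ := hf.surj b
    exact ih (Fin.cons_mem_cons hvw hb) (h a)

end SurjHyper

theorem pef_preservation_by_surjHyper_general {σ : Signature} {α β : Type}
    (A : Struc σ α) (B : Struc σ β)
    (f : α → Set β) (hf : SurjHyper A B f) :
    ∀ φ : PEF σ 0, φ.Sat A Fin.elim0 → φ.Sat B Fin.elim0 :=
  fun φ => hf.sat_of_sat φ fun i => i.elim0

/-- A surjective hypermorphism from `A` to `B` transfers truth of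
all positive equality-free first-order sentences from `A` to `B`. -/
theorem pef_preservation_by_surjHyper {σ : Signature} {α β : Type}
    [Finite α] [Finite β] (A : Struc σ α) (B : Struc σ β)
    (f : α → Set β) (hf : SurjHyper A B f) :
    ∀ φ : PEF σ 0, φ.Sat A Fin.elim0 → φ.Sat B Fin.elim0 :=
  pef_preservation_by_surjHyper_general A B f hf
end

section
/- If there is a surjective homomorphism from the m-th power A^m of a finite relational structure A onto a finite relational structure B, then every positive Horn sentence (using only ∃, ∀, ∧ and relational atoms, no equality) true in A is true in B. -/
/-- Positive Horn formulas (relational atoms, conjunction — including the empty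
conjunction `top` — existential and universal quantification), with `n` free variables. -/
inductive PH (σ : Signature) : ℕ → Type
  | top {n} : PH σ n
  | atom {n} (s : σ.symb) (ts : Fin (σ.ar s) → Fin n) : PH σ n
  | and {n} : PH σ n → PH σ n → PH σ n
  | ex {n} : PH σ (n + 1) → PH σ n
  | all {n} : PH σ (n + 1) → PH σ n

/-- Satisfaction of a positive Horn formula under a valuation. -/
def PH.Sat {σ : Signature} {α : Type} (A : Struc σ α) :
    ∀ {n}, PH σ n → (Fin n → α) → Prop
  | _, .top, _ => True
  | _, .atom s ts, v => A.rel s (fun i => v (ts i))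
  | _, .and φ ψ, v => φ.Sat A v ∧ ψ.Sat A v
  | _, .ex φ, v => ∃ a, φ.Sat A (Fin.cons a v)
  | _, .all φ, v => ∀ a, φ.Sat A (Fin.cons a v)

/-- The `m`-th categorical power of a structure. -/
def pow {σ : Signature} {α : Type} (A : Struc σ α) (m : ℕ) : Struc σ (Fin m → α) :=
  ⟨fun s t => ∀ j, A.rel s (fun i => t i j)⟩

/-!
A positive Horn sentence true in `A` is true coordinatewise in `A^m`, hence in `A^m` itself, since
every quantifier and atom of `A^m` is evaluated coordinatewise. Truth of positive Horn formulas is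
then carried along the surjective homomorphism `h`: atoms and `∃` survive any homomorphism, and
surjectivity is exactly what lets `∀` over `B` be pulled back to `∀` over `A^m`.
-/

namespace PH

variable {σ : Signature}

theorem Sat.pow_of_forall {α : Type} (A : Struc σ α) (m : ℕ) {n : ℕ} (φ : PH σ n)
    (v : Fin n → Fin m → α) (hv : ∀ j, φ.Sat A (fun i => v i j)) : φ.Sat (pow A m) v := by
  induction φ with
  | top => trivial
  | atom s ts => exact hv
  | and φ ψ ihφ ihψ => exact ⟨ihφ v fun j => (hv j).1, ihψ v fun j => (hv j).2⟩
  | ex φ ih =>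
    choose a ha using hv
    refine ⟨a, ih _ fun j => ?_⟩
    show φ.Sat A ((· j) ∘ Fin.cons a v)
    rw [Fin.comp_cons]
    exact ha j
  | all φ ih =>
    intro a
    refine ih _ fun j => ?_
    show φ.Sat A ((· j) ∘ Fin.cons a v)
    rw [Fin.comp_cons]
    exact hv j (a j)

theorem Sat.map_of_surjective {γ β : Type} {C : Struc σ γ} {B : Struc σ β} {h : γ → β}
    (hh : IsHom C B h) (hsurj : Function.Surjective h) {n : ℕ} (φ : PH σ n) (v : Fin n → γ)
    (hv : φ.Sat C v) : φ.Sat B (h ∘ v) := by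
  induction φ with
  | top => trivial
  | atom s ts => exact hh s _ hv
  | and φ ψ ihφ ihψ => exact ⟨ihφ v hv.1, ihψ v hv.2⟩
  | ex φ ih =>
    obtain ⟨a, ha⟩ := hv
    exact ⟨h a, by simpa only [Fin.comp_cons] using ih _ ha⟩
  | all φ ih =>
    intro b
    obtain ⟨a, rfl⟩ := hsurj b
    simpa only [Fin.comp_cons] using ih _ (hv a)

end PH

theorem ph_preservation_by_power_surj_general {σ : Signature} {α β : Type}
    (A : Struc σ α) (B : Struc σ β) (m : ℕ)
    (h : (Fin m → α) → β) (hh : IsHom (pow A m) B h) (hsurj : Function.Surjective h) :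
    ∀ φ : PH σ 0, φ.Sat A Fin.elim0 → φ.Sat B Fin.elim0 := by
  intro φ hφ
  have hpow : φ.Sat (pow A m) Fin.elim0 :=
    PH.Sat.pow_of_forall A m φ _ fun _ => by rwa [Subsingleton.elim (fun i => _) Fin.elim0]
  simpa only [Subsingleton.elim (h ∘ _) Fin.elim0] using
    PH.Sat.map_of_surjective hh hsurj φ _ hpow

/-- If there is a surjective homomorphism from the `m`-th power of
a finite structure `A` onto a finite structure `B` (with `m ≥ 1`), then every
positive Horn sentence true in `A` is true in `B`. -/
theorem ph_preservation_by_power_surj {σ : Signature} {α β : Type}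
    [Finite α] [Finite β] (A : Struc σ α) (B : Struc σ β) (m : ℕ) (hm : 1 ≤ m)
    (h : (Fin m → α) → β) (hh : IsHom (pow A m) B h) (hsurj : Function.Surjective h) :
    ∀ φ : PH σ 0, φ.Sat A Fin.elim0 → φ.Sat B Fin.elim0 :=
  ph_preservation_by_power_surj_general A B m h hh hsurj
end

section
/- For finite relational structures A and B: if B satisfies the canonical positive equality-free sentence θ_{A,|B|} of A, then there exists a surjective hypermorphism from A to B. -/
/-- Conjunction of a list of formulas. -/
def PEF.conjList {σ : Signature} {n : ℕ} : List (PEF σ n) → PEF σ n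
  | [] => .top
  | φ :: l => .and φ (conjList l)

/-- Disjunction of a list of formulas. -/
def PEF.orList {σ : Signature} {n : ℕ} : List (PEF σ n) → PEF σ n
  | [] => .bot
  | φ :: l => .or φ (orList l)

/-- Existentially quantify the `m` innermost variables. -/
def PEF.exs {σ : Signature} : ∀ {k m : ℕ}, PEF σ (k + m) → PEF σ k
  | _, 0, φ => φ
  | _, m + 1, φ => PEF.exs (m := m) φ.ex

/-- Universally quantify the `m` innermost variables. -/
def PEF.alls {σ : Signature} : ∀ {k m : ℕ}, PEF σ (k + m) → PEF σ k
  | _, 0, φ => φ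
  | _, m + 1, φ => PEF.alls (m := m) φ.all

/-- The conjunction of all atoms expressing the positive facts of `A` on the tuple
of elements `g` (the diagram formula `φ_{A(g)}`). -/
noncomputable def diagram {σ : Signature} [Fintype σ.symb] [DecidableEq σ.symb]
    {α : Type} [Fintype α] [DecidableEq α]
    (A : Struc σ α) [∀ s t, Decidable (A.rel s t)] {k : ℕ} (g : Fin k → α) :
    PEF σ k :=
  PEF.conjList
    (((Finset.univ.filter
        (fun p : Σ s : σ.symb, Fin (σ.ar s) → Fin k =>
          A.rel p.1 (fun i => g (p.2 i)))).toList).map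
      (fun p => PEF.atom p.1 p.2))

/-- The canonical positive equality-free sentence
`θ_{A,m} = ∃v̄ (φ_{A(r̄)}(v̄) ∧ ∀w̄ ⋁_{t̄ ∈ A^m} φ_{A(r̄,t̄)}(v̄,w̄))`,
where `r̄` enumerates the elements of `A` via `e`. -/
noncomputable def theta {σ : Signature} [Fintype σ.symb] [DecidableEq σ.symb]
    {α : Type} [Fintype α] [DecidableEq α]
    (A : Struc σ α) [∀ s t, Decidable (A.rel s t)]
    (n : ℕ) (e : α ≃ Fin n) (m : ℕ) : PEF σ 0 :=
  PEF.exs (k := 0) (m := n) (PEF.and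
    (diagram A (fun i : Fin (0 + n) => e.symm ⟨(i : ℕ), by have := i.isLt; omega⟩))
    (PEF.alls (k := 0 + n) (m := m)
      (PEF.orList ((Finset.univ : Finset (Fin m → α)).toList.map (fun t =>
        diagram A (fun j : Fin ((0 + n) + m) =>
          if h : (j : ℕ) < m then t ⟨(j : ℕ), h⟩
          else e.symm ⟨(j : ℕ) - m, by have := j.isLt; omega⟩))))))

/-!
Let `u` witness the outer existential block of `θ_{A,|B|}` and instantiate the universal block with
an enumeration `w` of `B`. Some disjunct `φ_{A(r̄,t̄)}` then holds of `(ū, w̄)`, so the two tuples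
`(r̄, t̄)` in `A` and `(ū, w̄)` in `B` have the property that every fact of `A` among entries of the
first transfers to the corresponding entries of the second. Sending `a` to the set of all entries
of the second tuple sitting at a position where the first one has `a` is then a hypermorphism: it
is total because `r̄` lists all of `A` and surjective because `w̄` lists all of `B`.
-/

section Valuation

variable {γ : Type}

/-- `u` fills the `m` innermost variables of a `PEF σ (k + m)`, which sit at the low indices
because `Fin.cons` puts each newly quantified variable at index `0`; `v` fills the outer ones. -/
def prependVals {k m : ℕ} (u : Fin m → γ) (v : Fin k → γ) : Fin (k + m) → γ :=
  fun j => if h : (j : ℕ) < m then u ⟨j, h⟩ else v ⟨(j : ℕ) - m, by omega⟩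

lemma prependVals_zero {k : ℕ} (u : Fin 0 → γ) (v : Fin k → γ) : prependVals u v = v := by
  funext j
  simp [prependVals]

lemma cons_prependVals {k m : ℕ} (a : γ) (u : Fin m → γ) (v : Fin k → γ) :
    (Fin.cons a (prependVals u v) : Fin (k + m + 1) → γ) = prependVals (Fin.cons a u) v := by
  funext j
  refine Fin.cases ?_ (fun i => ?_) j
  · simp [prependVals]
  · simp only [Fin.cons_succ, prependVals, Fin.val_succ]
    by_cases hi : (i : ℕ) < m
    · rw [dif_pos hi, dif_pos (by omega)]
      exact (Fin.cons_succ (α := fun _ => γ) a u ⟨i, hi⟩).symm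
    · rw [dif_neg hi, dif_neg (by omega)]
      congr 1
      ext
      simp

lemma prependVals_surjective_left {k m : ℕ} {u : Fin m → γ} (hu : u.Surjective)
    (v : Fin k → γ) : (prependVals u v).Surjective := by
  intro c
  obtain ⟨i, rfl⟩ := hu c
  exact ⟨⟨i, by omega⟩, by simp [prependVals]⟩

lemma prependVals_surjective_right {k m : ℕ} (u : Fin m → γ) {v : Fin k → γ}
    (hv : v.Surjective) : (prependVals u v).Surjective := by
  intro c
  obtain ⟨i, rfl⟩ := hv c
  exact ⟨⟨m + i, by omega⟩, by simp [prependVals]⟩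

end Valuation

namespace PEF

variable {σ : Signature} {β : Type} (B : Struc σ β)

lemma sat_conjList {n : ℕ} (l : List (PEF σ n)) (v : Fin n → β) :
    (conjList l).Sat B v ↔ ∀ φ ∈ l, φ.Sat B v := by
  induction l with
  | nil => simp [conjList, Sat]
  | cons a l ih => simp [conjList, Sat, ih]

lemma sat_orList {n : ℕ} (l : List (PEF σ n)) (v : Fin n → β) :
    (orList l).Sat B v ↔ ∃ φ ∈ l, φ.Sat B v := by
  induction l with
  | nil => simp [orList, Sat]
  | cons a l ih => simp [orList, Sat, ih]

lemma sat_exs {k m : ℕ} (φ : PEF σ (k + m)) (v : Fin k → β) :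
    (exs φ).Sat B v ↔ ∃ u : Fin m → β, φ.Sat B (prependVals u v) := by
  induction m with
  | zero => simp [exs, prependVals_zero]
  | succ m ih =>
    rw [show exs φ = exs (m := m) φ.ex from rfl, ih]
    constructor
    · rintro ⟨u, a, hφ⟩
      exact ⟨Fin.cons a u, by rwa [← cons_prependVals]⟩
    · rintro ⟨u, hφ⟩
      refine ⟨Fin.tail u, u 0, ?_⟩
      rwa [cons_prependVals, Fin.cons_self_tail]

lemma sat_alls {k m : ℕ} (φ : PEF σ (k + m)) (v : Fin k → β) :
    (alls φ).Sat B v ↔ ∀ u : Fin m → β, φ.Sat B (prependVals u v) := by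
  induction m with
  | zero => simp [alls, prependVals_zero]
  | succ m ih =>
    rw [show alls φ = alls (m := m) φ.all from rfl, ih]
    constructor
    · intro hφ u
      simpa only [cons_prependVals, Fin.cons_self_tail] using hφ (Fin.tail u) (u 0)
    · intro hφ u a
      rw [cons_prependVals]
      exact hφ _

end PEF

section Diagram

variable {σ : Signature} [Fintype σ.symb] [DecidableEq σ.symb]
  {α β : Type} [Fintype α] [DecidableEq α]
  (A : Struc σ α) [∀ s t, Decidable (A.rel s t)] (B : Struc σ β)

lemma sat_diagram_iff {k : ℕ} (g : Fin k → α) (v : Fin k → β) :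
    (diagram A g).Sat B v ↔
      ∀ s (ts : Fin (σ.ar s) → Fin k), A.rel s (g ∘ ts) → B.rel s (v ∘ ts) := by
  simp only [diagram, PEF.sat_conjList, List.forall_mem_map, Finset.mem_toList,
    Finset.mem_filter, Finset.mem_univ, true_and, PEF.Sat, Sigma.forall]
  rfl

def tupleCorrespondence {k : ℕ} (g : Fin k → α) (v : Fin k → β) (a : α) : Set β :=
  v '' (g ⁻¹' {a})

lemma surjHyper_tupleCorrespondence {k : ℕ} {g : Fin k → α} {v : Fin k → β}
    (hg : g.Surjective) (hv : v.Surjective) (hdiag : (diagram A g).Sat B v) :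
    SurjHyper A B (tupleCorrespondence g v) where
  total a := by
    obtain ⟨j, hj⟩ := hg a
    exact ⟨v j, j, hj, rfl⟩
  surj b := by
    obtain ⟨j, hj⟩ := hv b
    exact ⟨g j, j, rfl, hj⟩
  pres s t u hrel hu := by
    choose idx hidx_g hidx_v using hu
    have ht_eq : t = g ∘ idx := funext fun i => (hidx_g i).symm
    have hu_eq : u = v ∘ idx := funext fun i => (hidx_v i).symm
    rw [ht_eq] at hrel
    rw [hu_eq]
    exact (sat_diagram_iff A B g v).1 hdiag s idx hrel

end Diagram

/-- If `B` satisfies the canonical positive equality-free sentence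
`θ_{A,|B|}` of `A`, then there is a surjective hypermorphism from `A` to `B`. -/
theorem surjHyper_of_sat_theta {σ : Signature} [Fintype σ.symb] [DecidableEq σ.symb]
    {α β : Type} [Fintype α] [DecidableEq α] [Fintype β]
    (A : Struc σ α) (B : Struc σ β) [∀ s t, Decidable (A.rel s t)]
    (n : ℕ) (e : α ≃ Fin n)
    (h : (theta A n e (Fintype.card β)).Sat B Fin.elim0) :
    ∃ f : α → Set β, SurjHyper A B f := by
  rw [theta, PEF.sat_exs] at h
  obtain ⟨u, -, hall⟩ := h
  let w := (Fintype.equivFin β).symm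
  obtain ⟨_, hmem, hdiag⟩ := (PEF.sat_orList B _ _).1 ((PEF.sat_alls B _ _).1 hall w)
  obtain ⟨t, -, rfl⟩ := List.mem_map.1 hmem
  have henum : (fun i : Fin (0 + n) => e.symm ⟨i, by omega⟩).Surjective :=
    fun a => ⟨⟨e a, by omega⟩, by simp⟩
  exact ⟨_, surjHyper_tupleCorrespondence A B (prependVals_surjective_right t henum)
    (prependVals_surjective_left w.surjective _) hdiag⟩
end

section
/- For every m ≥ 2 there exist finite structures A and B over the signature with one binary relation E and one unary relation R, with |A| = m and |B| = m+1, such that a surjective homomorphism from A^j to B exists if and only if j ≥ m. -/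
/-- The signature with one binary relation symbol `E` (coded `true`) and one unary
relation symbol `R` (coded `false`). -/
def graphSig : Signature := ⟨Bool, fun b => if b then 2 else 1⟩

/-!
Take `A` the directed `m`-cycle on `Fin m` with `R` off `0`, and `B` a directed `m`-cycle without
`R` together with a looped `R`-vertex `last`. For `j ≥ m`, send a tuple of `A^j` that takes every
value of `Fin m` to the cycle vertex given by a fixed coordinate, and every other tuple to `last`;
shifting all coordinates by `1` preserves taking every value, which makes this a homomorphism.
For `j < m`, every tuple `x` has a shift `x + c` avoiding `0` in all coordinates, so any
homomorphism `h` sends `x + c` to `last`; since `last` has no in-edge from the cycle, walking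
back along `x → x + 1` gives `h x = last`, so `h` misses the cycle.
-/

section GraphStruc
variable {α β : Type}

def graphStruc (E : α → α → Prop) (R : α → Prop) : Struc graphSig α where
  rel
    | true, t => E (t (0 : Fin 2)) (t (1 : Fin 2))
    | false, t => R (t (0 : Fin 1))

theorem isHom_graphStruc_iff {E : α → α → Prop} {R : α → Prop} {E' : β → β → Prop}
    {R' : β → Prop} {h : α → β} :
    IsHom (graphStruc E R) (graphStruc E' R') h ↔
      (∀ x y, E x y → E' (h x) (h y)) ∧ ∀ x, R x → R' (h x) := by
  refine ⟨fun hh => ⟨fun x y => hh true ![x, y], fun x => hh false ![x]⟩, ?_⟩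
  rintro ⟨hE, hR⟩ (_ | _) t
  exacts [hR _, hE _ _]

theorem pow_graphStruc (E : α → α → Prop) (R : α → Prop) (j : ℕ) :
    pow (graphStruc E R) j =
      graphStruc (fun x y => ∀ i, E (x i) (y i)) (fun x => ∀ i, R (x i)) := by
  unfold pow graphStruc
  congr 1
  funext s t
  cases s <;> rfl

end GraphStruc

theorem exists_surjective_apply_eq {ι G : Type*} [AddGroup G] {s : ι → G}
    (hs : Function.Surjective s) (i₀ : ι) (a : G) :
    ∃ x : ι → G, Function.Surjective x ∧ x i₀ = a :=
  ⟨fun i => a - s i₀ + s i, ((Equiv.addLeft _).comp_surjective s).2 hs, sub_add_cancel a _⟩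

theorem exists_forall_add_ne_zero {ι G : Type*} [AddGroup G] [Fintype ι] [Fintype G]
    (hcard : Fintype.card ι < Fintype.card G) (x : ι → G) : ∃ c : G, ∀ i, x i + c ≠ 0 := by
  by_contra! hx
  have hs : Function.Surjective (fun i => -x i) := fun c =>
    (hx c).imp fun _ => neg_eq_of_add_eq_zero_right
  exact (Fintype.card_le_of_surjective _ hs).not_gt hcard

section Construction
variable (m : ℕ) [NeZero m]

def markedCycle : Struc graphSig (Fin m) := graphStruc (fun x y => y = x + 1) (· ≠ 0)

def cycleLoopAdj (u v : Fin (m + 1)) : Prop :=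
  (∃ a : Fin m, u = a.castSucc ∧ v = (a + 1).castSucc) ∨ (u = Fin.last m ∧ v = Fin.last m)

def cycleWithLoop : Struc graphSig (Fin (m + 1)) := graphStruc (cycleLoopAdj m) (· = Fin.last m)

variable {m}

theorem eq_last_of_cycleLoopAdj_last {u : Fin (m + 1)} (h : cycleLoopAdj m u (Fin.last m)) :
    u = Fin.last m := by
  rcases h with ⟨a, -, ha⟩ | ⟨hu, -⟩
  · exact absurd ha.symm (Fin.castSucc_ne_last _)
  · exact hu

variable {j : ℕ}

theorem isHom_pow_markedCycle_iff {h : (Fin j → Fin m) → Fin (m + 1)} :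
    IsHom (pow (markedCycle m) j) (cycleWithLoop m) h ↔
      (∀ x, cycleLoopAdj m (h x) (h (x + 1))) ∧ ∀ x, (∀ i, x i ≠ 0) → h x = Fin.last m := by
  rw [markedCycle, cycleWithLoop, pow_graphStruc, isHom_graphStruc_iff]
  refine and_congr ⟨fun hE x => hE x _ fun _ => rfl, ?_⟩ Iff.rfl
  rintro hE x y hxy
  obtain rfl : y = x + 1 := funext hxy
  exact hE x

open Classical in
def coverMap (i₀ : Fin j) (x : Fin j → Fin m) : Fin (m + 1) :=
  if Function.Surjective x then (x i₀).castSucc else Fin.last m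

theorem coverMap_isHom (i₀ : Fin j) :
    IsHom (pow (markedCycle m) j) (cycleWithLoop m) (coverMap i₀) := by
  refine isHom_pow_markedCycle_iff.2 ⟨fun x => ?_, fun x hx => ?_⟩
  · have hsucc : Function.Surjective (x + 1) ↔ Function.Surjective x :=
      (Equiv.addRight 1).comp_surjective x
    by_cases hx : Function.Surjective x
    · have hx' : Function.Surjective (x + 1) := hsucc.2 hx
      exact Or.inl ⟨x i₀, by simp [coverMap, hx, hx']⟩
    · have hx' : ¬ Function.Surjective (x + 1) := mt hsucc.1 hx
      exact Or.inr ⟨by simp [coverMap, hx], by simp [coverMap, hx']⟩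
  · have hx' : ¬ Function.Surjective x := fun hs => (hs 0).elim hx
    simp [coverMap, hx']

theorem coverMap_surjective (hm : 2 ≤ m) (hmj : m ≤ j) (i₀ : Fin j) :
    Function.Surjective (coverMap (m := m) i₀) := by
  intro v
  induction v using Fin.lastCases with
  | last =>
    obtain ⟨b, hb⟩ := @exists_ne (Fin m) (Fin.nontrivial_iff_two_le.2 hm) 0
    have hconst : ¬ Function.Surjective (fun _ : Fin j => (0 : Fin m)) := fun hs =>
      (hs b).elim fun _ h => hb h.symm
    exact ⟨fun _ => 0, by simp [coverMap, hconst]⟩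
  | cast a =>
    obtain ⟨x, hx, hxa⟩ := exists_surjective_apply_eq
      (Function.invFun_surjective (Fin.castLE_injective hmj)) i₀ a
    exact ⟨x, by simp [coverMap, hx, hxa]⟩

theorem apply_eq_last_of_apply_add_one {h : (Fin j → Fin m) → Fin (m + 1)}
    (hh : IsHom (pow (markedCycle m) j) (cycleWithLoop m) h) {x : Fin j → Fin m}
    (hx : h (x + 1) = Fin.last m) : h x = Fin.last m :=
  eq_last_of_cycleLoopAdj_last (hx ▸ (isHom_pow_markedCycle_iff.1 hh).1 x)

theorem apply_eq_last_of_apply_add_nsmul {h : (Fin j → Fin m) → Fin (m + 1)}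
    (hh : IsHom (pow (markedCycle m) j) (cycleWithLoop m) h) (x : Fin j → Fin m) (n : ℕ)
    (hx : h (x + n • 1) = Fin.last m) : h x = Fin.last m := by
  induction n with
  | zero => simpa using hx
  | succ n ih =>
    refine ih (apply_eq_last_of_apply_add_one hh ?_)
    rwa [add_assoc, ← succ_nsmul]

theorem apply_eq_last_of_lt (hjm : j < m) {h : (Fin j → Fin m) → Fin (m + 1)}
    (hh : IsHom (pow (markedCycle m) j) (cycleWithLoop m) h) (x : Fin j → Fin m) :
    h x = Fin.last m := by
  obtain ⟨c, hc⟩ := exists_forall_add_ne_zero (by simpa using hjm) x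
  refine apply_eq_last_of_apply_add_nsmul hh x c.val
    ((isHom_pow_markedCycle_iff.1 hh).2 _ fun i => ?_)
  open Fin.NatCast in
  simpa [nsmul_one, Fin.cast_val_eq_self] using hc i

end Construction

/-- For every `m ≥ 2` there are finite structures `A` (of size `m`)
and `B` (of size `m+1`) over the signature `{E, R}` such that a surjective
homomorphism from `A^j` to `B` exists if and only if `j ≥ m`. -/
theorem power_surjection_lower_bound (m : ℕ) (hm : 2 ≤ m) :
    ∃ (A : Struc graphSig (Fin m)) (B : Struc graphSig (Fin (m + 1))),
      ∀ j : ℕ,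
        (∃ h : (Fin j → Fin m) → Fin (m + 1),
          IsHom (pow A j) B h ∧ Function.Surjective h) ↔ m ≤ j := by
  have : NeZero m := ⟨by omega⟩
  refine ⟨markedCycle m, cycleWithLoop m, fun j => ⟨?_, fun hmj => ?_⟩⟩
  · rintro ⟨h, hh, hsurj⟩
    by_contra! hjm
    obtain ⟨x, hx⟩ := hsurj (0 : Fin m).castSucc
    exact Fin.castSucc_ne_last _ (hx ▸ apply_eq_last_of_lt hjm hh x)
  · exact ⟨coverMap ⟨0, by omega⟩, coverMap_isHom _, coverMap_surjective hm hmj _⟩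
end

section
/- If B is a two-element relational structure (possibly over an infinite relational signature) in which the elements 0 and 1 satisfy exactly the same positive Horn formulas in one free variable, then B has an automorphism swapping 0 and 1. -/
/-
If `0` and `1` had the same positive Horn type but some relation `R` held of a tuple `t` and
not of its complement `!t`, consider the binary relation `θ x y` saying that `R` holds of the
tuple with `x` at the `false` positions of `t` and `y` at its `true` positions, so that
`θ 0 1` holds and `θ 1 0` fails. Transferring `∃ y, θ x y` from `x = 0` to `x = 1` gives
`θ 1 1`; then `∀ y, θ y x` holds at `x = 1`, and transferring it to `x = 0` gives `θ 1 0`.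
-/

section

variable {σ : Signature} {α : Type}

def SamePHType (A : Struc σ α) (a b : α) : Prop :=
  ∀ φ : PH σ 1, φ.Sat A (fun _ => a) ↔ φ.Sat A (fun _ => b)

def PatternRel (A : Struc σ α) (s : σ.symb) (t : Fin (σ.ar s) → Bool) (x y : α) : Prop :=
  A.rel s fun k => cond (t k) y x

variable {A : Struc σ α} {a b : α}

theorem SamePHType.exists_patternRel_iff (h : SamePHType A a b) (s : σ.symb)
    (t : Fin (σ.ar s) → Bool) :
    (∃ y, PatternRel A s t a y) ↔ ∃ y, PatternRel A s t b y := by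
  simpa only [PatternRel, PH.Sat, Bool.apply_cond, Fin.cons_zero, Fin.cons_one] using
    h (.ex (.atom s fun k => cond (t k) 0 1))

theorem SamePHType.forall_patternRel_iff (h : SamePHType A a b) (s : σ.symb)
    (t : Fin (σ.ar s) → Bool) :
    (∀ y, PatternRel A s t y a) ↔ ∀ y, PatternRel A s t y b := by
  simpa only [PatternRel, PH.Sat, Bool.apply_cond, Fin.cons_zero, Fin.cons_one] using
    h (.all (.atom s fun k => cond (t k) 1 0))

end

theorem Bool.rel_true_false_of_transfer {θ : Bool → Bool → Prop}
    (hex : (∃ y, θ false y) → ∃ y, θ true y) (hall : (∀ y, θ y true) → ∀ y, θ y false)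
    (h : θ false true) : θ true false := by
  obtain ⟨_ | _, hy⟩ := hex ⟨true, h⟩
  · exact hy
  · exact hall (fun | false => h | true => hy) true

theorem isHom_not_of_samePHType {σ : Signature} {B : Struc σ Bool}
    (h : SamePHType B false true) : IsHom B B not := by
  intro s t ht
  have hswap := Bool.rel_true_false_of_transfer (θ := PatternRel B s t)
    (h.exists_patternRel_iff s t).1 (h.forall_patternRel_iff s t).2 (by simpa [PatternRel] using ht)
  simpa [PatternRel] using hswap

/-- If the two elements of a two-element structure `B` (over a
possibly infinite relational signature) satisfy exactly the same positive Horn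
formulas in one free variable, then `B` has an automorphism swapping the two
elements. -/
theorem boolean_swap_automorphism {σ : Signature} (B : Struc σ Bool)
    (h : ∀ φ : PH σ 1, φ.Sat B (fun _ => false) ↔ φ.Sat B (fun _ => true)) :
    ∃ e : Bool ≃ Bool, (∀ b, e b = !b) ∧ IsHom B B e ∧ IsHom B B e.symm :=
  ⟨Equiv.boolNot, fun _ => rfl, isHom_not_of_samePHType h, isHom_not_of_samePHType h⟩
end

section
/- Two two-element relational structures that satisfy exactly the same positive Horn sentences are isomorphic. -/
theorem iSup_bool_eq_of_le {α : Type*} [CompleteLattice α] {f : Bool → α} {c : Bool}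
    (h : f (!c) ≤ f c) : ⨆ b, f b = f c :=
  le_antisymm (iSup_le ((Bool.forall_bool' c).2 ⟨le_rfl, h⟩)) (le_iSup f c)

theorem iInf_bool_eq_of_le {α : Type*} [CompleteLattice α] {f : Bool → α} {c : Bool}
    (h : f c ≤ f (!c)) : ⨅ b, f b = f c :=
  le_antisymm (iInf_le f c) (le_iInf ((Bool.forall_bool' c).2 ⟨le_rfl, h⟩))

theorem eq_iSup_of_iSup_le_iInf {ι α : Type*} [CompleteLattice α] {f : ι → α}
    (h : ⨆ i, f i ≤ ⨅ i, f i) (i : ι) : f i = ⨆ i, f i :=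
  le_antisymm (le_iSup f i) (h.trans (iInf_le f i))

theorem Bool.equiv_apply_not (e : Bool ≃ Bool) (a : Bool) : e (!a) = !e a :=
  Bool.eq_not_iff.2 (e.injective.ne (Bool.not_ne_self a))

namespace PH

variable {σ : Signature}

def rename : ∀ {n m : ℕ}, (Fin n → Fin m) → PH σ n → PH σ m
  | _, _, _, .top => .top
  | _, _, f, .atom s ts => .atom s (f ∘ ts)
  | _, _, f, .and φ ψ => .and (rename f φ) (rename f ψ)
  | _, _, f, .ex φ => .ex (rename (Fin.cons 0 (Fin.succ ∘ f)) φ)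
  | _, _, f, .all φ => .all (rename (Fin.cons 0 (Fin.succ ∘ f)) φ)

theorem cons_comp_cons_zero_succ {α : Type} {n m : ℕ} (f : Fin n → Fin m) (a : α)
    (v : Fin m → α) :
    Fin.cons a v ∘ (Fin.cons 0 (Fin.succ ∘ f) : Fin (n + 1) → Fin (m + 1)) =
      Fin.cons a (v ∘ f) := by
  rw [Fin.comp_cons]
  rfl

theorem sat_rename {α : Type} (X : Struc σ α) {n m : ℕ} (φ : PH σ n) (f : Fin n → Fin m)
    (v : Fin m → α) : (φ.rename f).Sat X v ↔ φ.Sat X (v ∘ f) := by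
  induction φ generalizing m with
  | top | atom => rfl
  | and φ ψ ihφ ihψ => exact and_congr (ihφ f v) (ihψ f v)
  | ex φ ih => exact exists_congr fun a => (ih _ _).trans (by rw [cons_comp_cons_zero_succ])
  | all φ ih => exact forall_congr' fun a => (ih _ _).trans (by rw [cons_comp_cons_zero_succ])

def swap (ψ : PH σ 2) : PH σ 2 := ψ.rename ![1, 0]

def diag (ψ : PH σ 2) : PH σ 1 := ψ.rename ![0, 0]

section Sat

variable {α : Type} (X : Struc σ α)

theorem sat_swap (ψ : PH σ 2) (a b : α) : ψ.swap.Sat X ![a, b] ↔ ψ.Sat X ![b, a] := by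
  rw [swap, sat_rename]
  congr!
  ext i
  fin_cases i <;> rfl

theorem sat_diag (ψ : PH σ 2) (a : α) : ψ.diag.Sat X ![a] ↔ ψ.Sat X ![a, a] := by
  rw [diag, sat_rename]
  congr!
  ext i
  fin_cases i <;> rfl

theorem sat_all_swap (ψ : PH σ 2) (a : α) : ψ.swap.all.Sat X ![a] ↔ ∀ b, ψ.Sat X ![a, b] :=
  forall_congr' fun b => sat_swap X ψ b a

theorem sat_ex_swap (ψ : PH σ 2) (a : α) : ψ.swap.ex.Sat X ![a] ↔ ∃ b, ψ.Sat X ![a, b] :=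
  exists_congr fun b => sat_swap X ψ b a

end Sat

def typeOf {α : Type} (X : Struc σ α) (a : α) : Set (PH σ 1) := {φ | φ.Sat X ![a]}

@[simp]
theorem mem_typeOf {α : Type} {X : Struc σ α} {a : α} {φ : PH σ 1} :
    φ ∈ typeOf X a ↔ φ.Sat X ![a] :=
  Iff.rfl

def Equivalent {α β : Type} (A : Struc σ α) (B : Struc σ β) : Prop :=
  ∀ φ : PH σ 0, φ.Sat A ![] ↔ φ.Sat B ![]

namespace Equivalent

variable {α β : Type} {A : Struc σ α} {B : Struc σ β}

theorem iUnion_typeOf_eq (h : Equivalent A B) : ⋃ a, typeOf A a = ⋃ b, typeOf B b :=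
  Set.ext fun φ => by simp only [Set.mem_iUnion, mem_typeOf]; exact h φ.ex

theorem iInter_typeOf_eq (h : Equivalent A B) : ⋂ a, typeOf A a = ⋂ b, typeOf B b :=
  Set.ext fun φ => by simp only [Set.mem_iInter, mem_typeOf]; exact h φ.all

end Equivalent

variable {X A B : Struc σ Bool}

theorem mem_typeOf_iff_and_mem_iUnion {φ : PH σ 1} {a : Bool} (ha : φ ∈ typeOf X a)
    (hna : φ ∉ typeOf X (!a)) (ψ : PH σ 1) : ψ ∈ typeOf X a ↔ ψ.and φ ∈ ⋃ x, typeOf X x := by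
  rw [Set.mem_iUnion, Bool.exists_bool' a]
  exact ⟨fun hψ => .inl ⟨hψ, ha⟩, fun hx => hx.elim And.left fun hx' => absurd hx'.2 hna⟩

namespace Equivalent

theorem exists_typeOf_eq_of_mem_of_notMem (h : Equivalent A B) {φ : PH σ 1} {a : Bool}
    (ha : φ ∈ typeOf A a) (hna : φ ∉ typeOf A (!a)) : ∃ b, typeOf A a = typeOf B b := by
  obtain ⟨b, hb⟩ := Set.mem_iUnion.1 (h.iUnion_typeOf_eq ▸ Set.mem_iUnion.2 ⟨a, ha⟩)
  have hnb : φ ∉ typeOf B (!b) := fun hnb =>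
    have hall : φ ∈ ⋂ x, typeOf B x := Set.mem_iInter.2 ((Bool.forall_bool' b).2 ⟨hb, hnb⟩)
    hna (Set.mem_iInter.1 (h.iInter_typeOf_eq ▸ hall) (!a))
  refine ⟨b, Set.ext fun ψ => ?_⟩
  rw [mem_typeOf_iff_and_mem_iUnion ha hna, mem_typeOf_iff_and_mem_iUnion hb hnb,
    h.iUnion_typeOf_eq]

theorem typeOf_eq_of_typeOf_false_eq_true (h : Equivalent A B)
    (hA : typeOf A false = typeOf A true) (a : Bool) : typeOf A a = typeOf B a := by
  have hUI_A : ⋃ x, typeOf A x = ⋂ x, typeOf A x :=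
    (iSup_bool_eq_of_le (c := true) hA.le).trans (iInf_bool_eq_of_le hA.ge).symm
  have hUI_B : ⋃ x, typeOf B x = ⋂ x, typeOf B x := by
    rw [← h.iUnion_typeOf_eq, ← h.iInter_typeOf_eq, hUI_A]
  calc typeOf A a = ⋃ x, typeOf A x := eq_iSup_of_iSup_le_iInf hUI_A.le a
    _ = ⋃ x, typeOf B x := h.iUnion_typeOf_eq
    _ = typeOf B a := (eq_iSup_of_iSup_le_iInf hUI_B.le a).symm

theorem exists_typeOf_eq (h : Equivalent A B) (hA : Function.Injective (typeOf A)) (a : Bool) :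
    ∃ b, typeOf A a = typeOf B b := by
  by_cases ha : typeOf A a ⊆ typeOf A (!a)
  · have hna : ¬ typeOf A (!a) ⊆ typeOf A a := fun hna =>
      Bool.not_ne_self a (hA (subset_antisymm ha hna)).symm
    obtain ⟨φ, hφ, hnφ⟩ := Set.not_subset.1 hna
    obtain ⟨d, hd⟩ := h.exists_typeOf_eq_of_mem_of_notMem hφ (by rwa [Bool.not_not])
    have hdB : typeOf B (!d) ⊆ typeOf B d := calc
      typeOf B (!d) ⊆ ⋃ x, typeOf B x := Set.subset_iUnion _ _
      _ = ⋃ x, typeOf A x := h.iUnion_typeOf_eq.symm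
      _ = typeOf A (!a) := iSup_bool_eq_of_le (by rwa [Bool.not_not])
      _ = typeOf B d := hd
    refine ⟨!d, ?_⟩
    calc typeOf A a = ⋂ x, typeOf A x := (iInf_bool_eq_of_le ha).symm
      _ = ⋂ x, typeOf B x := h.iInter_typeOf_eq
      _ = typeOf B (!d) := iInf_bool_eq_of_le (by rwa [Bool.not_not])
  · obtain ⟨φ, hφ, hnφ⟩ := Set.not_subset.1 ha
    exact h.exists_typeOf_eq_of_mem_of_notMem hφ hnφ

theorem exists_equiv_typeOf_eq (h : Equivalent A B) :
    ∃ e : Bool ≃ Bool, ∀ a, typeOf A a = typeOf B (e a) := by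
  by_cases hA : Function.Injective (typeOf A)
  · choose f hf using h.exists_typeOf_eq hA
    have hf_inj : f.Injective := fun a a' haa' => hA (by rw [hf, hf, haa'])
    exact ⟨Equiv.ofBijective f hf_inj.bijective_of_finite, hf⟩
  · rw [Bool.injective_iff, not_not] at hA
    exact ⟨Equiv.refl _, h.typeOf_eq_of_typeOf_false_eq_true hA⟩

end Equivalent

theorem sat_two_iff_of_typeOf_eq {e : Bool ≃ Bool} (he : ∀ a, typeOf A a = typeOf B (e a))
    (ψ : PH σ 2) (a b : Bool) : ψ.Sat A ![a, b] ↔ ψ.Sat B ![e a, e b] := by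
  have htype : ∀ φ : PH σ 1, φ.Sat A ![a] ↔ φ.Sat B ![e a] := fun φ => Set.ext_iff.1 (he a) φ
  have hdiag : ψ.Sat A ![a, a] ↔ ψ.Sat B ![e a, e a] := by
    simpa only [sat_diag] using htype ψ.diag
  rcases Bool.eq_or_eq_not b a with rfl | rfl
  · exact hdiag
  have hall := htype ψ.swap.all
  have hex := htype ψ.swap.ex
  rw [sat_all_swap, sat_all_swap, Bool.forall_bool' a, Bool.forall_bool' (e a)] at hall
  rw [sat_ex_swap, sat_ex_swap, Bool.exists_bool' a, Bool.exists_bool' (e a)] at hex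
  rw [Bool.equiv_apply_not]
  tauto

theorem rel_iff_of_sat_two_iff {e : Bool ≃ Bool}
    (H : ∀ (ψ : PH σ 2) (a b : Bool), ψ.Sat A ![a, b] ↔ ψ.Sat B ![e a, e b])
    (s : σ.symb) (t : Fin (σ.ar s) → Bool) : A.rel s t ↔ B.rel s (fun i => e (t i)) := by
  have key := H (.atom s (finTwoEquiv.symm ∘ t)) false true
  simp only [Sat] at key
  convert key using 2 <;> funext i <;> rw [Function.comp_apply] <;> cases t i <;> rfl

end PH

/-- Two two-element relational structures over a common signature
that satisfy exactly the same positive Horn sentences are isomorphic. -/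
theorem boolean_ph_equiv_iso {σ : Signature} (A B : Struc σ Bool)
    (h : ∀ φ : PH σ 0, φ.Sat A Fin.elim0 ↔ φ.Sat B Fin.elim0) :
    ∃ e : Bool ≃ Bool, IsHom A B e ∧ IsHom B A e.symm := by
  obtain ⟨e, he⟩ := PH.Equivalent.exists_equiv_typeOf_eq h
  have hrel := PH.rel_iff_of_sat_two_iff (PH.sat_two_iff_of_typeOf_eq he)
  refine ⟨e, fun s t ht => (hrel s t).1 ht, fun s t ht => (hrel s _).2 ?_⟩
  simpa only [Equiv.apply_symm_apply] using ht
end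

section
/- For a finite relational structure A over a finite signature σ, the following are equivalent: (1) A satisfies no proper positive Horn sentence; (2) A satisfies none of the r(σ) minimal proper positive Horn sentences ∀x_1 ∃x_2 ... ∃x_{r_i} R_i(x̄) (for each relation symbol R_i and each position of the universal variable in R_i); (3) the power A^{r(σ)} contains an isolated element (an element occurring in no tuple of any relation). -/
/-- Free variable `i` occurs in some atom of the positive Horn formula. -/
def PH.Occurs {σ : Signature} : ∀ {n}, PH σ n → Fin n → Prop
  | _, .top, _ => False
  | _, .atom _ ts, i => ∃ j, ts j = i
  | _, .and φ ψ, i => φ.Occurs i ∨ ψ.Occurs i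
  | _, .ex φ, i => φ.Occurs i.succ
  | _, .all φ, i => φ.Occurs i.succ

/-- A positive Horn formula is proper if some universally quantified variable
occurs in some atom of it. -/
def PH.Proper {σ : Signature} : ∀ {n}, PH σ n → Prop
  | _, .top => False
  | _, .atom _ _ => False
  | _, .and φ ψ => φ.Proper ∨ ψ.Proper
  | _, .ex φ => φ.Proper
  | _, .all φ => φ.Occurs 0 ∨ φ.Proper

/-- Close a formula by existential quantifiers, with a single outermost
universal quantifier (binding the last-closed variable). -/
def PH.closeAE {σ : Signature} : ∀ {k}, PH σ k → PH σ 0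
  | 0, φ => φ
  | 1, φ => φ.all
  | _ + 2, φ => closeAE φ.ex

/-- The minimal proper positive Horn sentence `∀x₁ ∃x₂ … ∃x_r R_s(x̄)`, where the
universally quantified variable `x₁` occupies position `p` of the atom (having
been transposed there) and the remaining positions carry the distinct
existentially quantified variables. -/
def minProper {σ : Signature} (s : σ.symb) (p : Fin (σ.ar s)) : PH σ 0 :=
  PH.closeAE (PH.atom s
    (fun i => Equiv.swap p ⟨σ.ar s - 1, by have := p.pos; omega⟩ i))

/-- An element of a structure is isolated if it appears in no tuple of any
relation. -/
def Isolated {σ : Signature} {α : Type} (A : Struc σ α) (x : α) : Prop :=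
  ∀ s (t : Fin (σ.ar s) → α), A.rel s t → ∀ i, t i ≠ x

/-!
A proper sentence has a universally quantified variable `x` sitting in some atom, so it
fails in every structure with an isolated element: instantiate `x` by that element.
Positive Horn sentences are preserved by powers, so none holds in `A` once `A^m` has an
isolated element. Conversely, if no minimal proper sentence holds then for every relation
symbol `R` and position `p` some `a_{R,p}` never occurs at position `p` of an `R`-tuple;
the element of `A^{r(σ)}` with coordinates `(a_{R,p})_{R,p}` is then isolated.
-/

theorem Fin.cons_eval {α β : Type} {n : ℕ} (b : β → α) (v : Fin n → β → α) (j : β) :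
    (fun i => (Fin.cons b v : Fin (n + 1) → β → α) i j) = Fin.cons (b j) fun i => v i j :=
  Fin.comp_cons (fun f : β → α => f j) b v

namespace PH

variable {σ : Signature} {α : Type}

theorem sat_closeAE_succ (A : Struc σ α) {n : ℕ} (φ : PH σ (n + 1)) :
    (closeAE φ).Sat A Fin.elim0 ↔ ∀ a, ∃ v : Fin (n + 1) → α, v (Fin.last n) = a ∧ φ.Sat A v := by
  induction n with
  | zero =>
    simp [closeAE, Sat, Fin.exists_fin_succ_pi, Fin.exists_fin_zero_pi, Fin.last,
      Subsingleton.elim finZeroElim Fin.elim0]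
  | succ n ih =>
    simp only [closeAE, ih φ.ex, Sat, Fin.exists_fin_succ_pi (n := n + 1), Fin.cons_last]
    exact forall_congr' fun a =>
      ⟨fun ⟨v, hv, b, h⟩ => ⟨b, v, hv, h⟩, fun ⟨b, v, hv, h⟩ => ⟨v, hv, b, h⟩⟩

theorem sat_closeAE (A : Struc σ α) {k : ℕ} (hk : 0 < k) (φ : PH σ k) :
    (closeAE φ).Sat A Fin.elim0 ↔ ∀ a, ∃ v : Fin k → α, v ⟨k - 1, by omega⟩ = a ∧ φ.Sat A v := by
  obtain ⟨n, rfl⟩ := Nat.exists_eq_add_of_lt hk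
  exact sat_closeAE_succ A φ

theorem proper_closeAE_succ {n : ℕ} (φ : PH σ (n + 1)) (h : φ.Occurs (Fin.last n)) :
    (closeAE φ).Proper := by
  induction n with
  | zero => exact Or.inl h
  | succ n ih => exact ih φ.ex (by simpa only [Occurs, Fin.succ_last] using h)

theorem proper_closeAE {k : ℕ} (hk : 0 < k) (φ : PH σ k) (h : φ.Occurs ⟨k - 1, by omega⟩) :
    (closeAE φ).Proper := by
  obtain ⟨n, rfl⟩ := Nat.exists_eq_add_of_lt hk
  exact proper_closeAE_succ φ h

theorem not_sat_of_occurs_isolated {B : Struc σ α} {x : α} (hx : Isolated B x)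
    {n : ℕ} (φ : PH σ n) {v : Fin n → α} {i : Fin n} (hi : φ.Occurs i) (hvi : v i = x) :
    ¬ φ.Sat B v := by
  induction φ with
  | top => exact hi.elim
  | atom s ts =>
    obtain ⟨j, rfl⟩ := hi
    exact fun h => hx s _ h j hvi
  | and φ ψ ihφ ihψ => exact hi.elim (fun h hs => ihφ h hvi hs.1) (fun h hs => ihψ h hvi hs.2)
  | ex φ ih => exact fun ⟨a, ha⟩ => ih hi (by simpa using hvi) ha
  | all φ ih => exact fun h => ih hi (by simpa using hvi) (h x)

theorem not_sat_of_proper_of_isolated {B : Struc σ α} {x : α} (hx : Isolated B x)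
    {n : ℕ} (φ : PH σ n) (hφ : φ.Proper) (v : Fin n → α) : ¬ φ.Sat B v := by
  induction φ with
  | top | atom => exact hφ.elim
  | and φ ψ ihφ ihψ => exact hφ.elim (fun h hs => ihφ h v hs.1) (fun h hs => ihψ h v hs.2)
  | ex φ ih => exact fun ⟨a, ha⟩ => ih hφ _ ha
  | all φ ih =>
    exact hφ.elim (fun h hs => not_sat_of_occurs_isolated hx φ h rfl (hs x))
      (fun h hs => ih h _ (hs x))

theorem sat_pow_iff (A : Struc σ α) (m : ℕ) {n : ℕ} (φ : PH σ n) (v : Fin n → Fin m → α) :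
    φ.Sat (pow A m) v ↔ ∀ j, φ.Sat A (fun i => v i j) := by
  induction φ with
  | top => simp [Sat]
  | atom => rfl
  | and φ ψ ihφ ihψ => simp only [Sat, ihφ, ihψ, forall_and]
  | ex φ ih =>
    simp only [Sat, ih, Fin.cons_eval]
    exact (Classical.skolem (p := fun j a => φ.Sat A (Fin.cons a fun i => v i j))).symm
  | all φ ih =>
    simp only [Sat, ih, Fin.cons_eval]
    exact ⟨fun h j a => h (fun _ => a) j, fun h b j => h j (b j)⟩

theorem not_sat_of_proper_of_isolated_pow {A : Struc σ α} {m : ℕ} {x : Fin m → α}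
    (hx : Isolated (pow A m) x) (φ : PH σ 0) (hφ : φ.Proper) : ¬ φ.Sat A Fin.elim0 := fun h =>
  not_sat_of_proper_of_isolated hx φ hφ Fin.elim0 <|
    (sat_pow_iff A m φ _).2 fun _ => by rwa [Subsingleton.elim (fun i => _) Fin.elim0]

end PH

section MinProper

variable {σ : Signature} {α : Type}

theorem minProper_sat_iff (A : Struc σ α) (s : σ.symb) (p : Fin (σ.ar s)) :
    (minProper s p).Sat A Fin.elim0 ↔ ∀ a, ∃ t, t p = a ∧ A.rel s t := by
  rw [minProper, PH.sat_closeAE A p.pos]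
  set q : Fin (σ.ar s) := ⟨σ.ar s - 1, _⟩
  refine forall_congr' fun a =>
    ⟨fun ⟨t, ht, h⟩ => ⟨_, by simpa using ht, h⟩, fun ⟨t, ht, h⟩ => ?_⟩
  exact ⟨t ∘ Equiv.swap p q, by simpa using ht, by simpa [PH.Sat, Function.comp_def] using h⟩

theorem minProper_proper (s : σ.symb) (p : Fin (σ.ar s)) : (minProper s p).Proper :=
  PH.proper_closeAE p.pos _ ⟨p, Equiv.swap_apply_left _ _⟩

theorem isolated_pow_of_forall_ne (A : Struc σ α) {m : ℕ} (x : Fin m → α)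
    (e : (Σ s, Fin (σ.ar s)) → Fin m) (hx : ∀ s p t, A.rel s t → t p ≠ x (e ⟨s, p⟩)) :
    Isolated (pow A m) x :=
  fun s _ ht p htp => hx s p _ (ht (e ⟨s, p⟩)) (congrFun htp _)

theorem exists_isolated_pow_of_not_sat_minProper [Fintype σ.symb] (A : Struc σ α)
    (h : ∀ s p, ¬ (minProper s p).Sat A Fin.elim0) :
    ∃ x, Isolated (pow A (∑ s, σ.ar s)) x := by
  have avoid : ∀ sp : Σ s, Fin (σ.ar s), ∃ a, ∀ t, t sp.2 = a → ¬ A.rel sp.1 t :=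
    fun ⟨s, p⟩ => by simpa [minProper_sat_iff] using h s p
  choose a ha using avoid
  let e := Fintype.equivFinOfCardEq (by simp : Fintype.card (Σ s, Fin (σ.ar s)) = ∑ s, σ.ar s)
  exact ⟨a ∘ e.symm, isolated_pow_of_forall_ne A _ e fun s p t ht htp =>
    ha ⟨s, p⟩ t (by simpa using htp) ht⟩

end MinProper

theorem no_proper_ph_tfae_general {σ : Signature} [Fintype σ.symb] {α : Type}
    (A : Struc σ α) :
    ((∀ φ : PH σ 0, φ.Proper → ¬ φ.Sat A Fin.elim0) ↔
      (∀ s (p : Fin (σ.ar s)), ¬ (minProper s p).Sat A Fin.elim0)) ∧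
    ((∀ s (p : Fin (σ.ar s)), ¬ (minProper s p).Sat A Fin.elim0) ↔
      (∃ x, Isolated (pow A (∑ s : σ.symb, σ.ar s)) x)) := by
  have h12 : (∀ φ : PH σ 0, φ.Proper → ¬ φ.Sat A Fin.elim0) →
      ∀ s p, ¬ (minProper s p).Sat A Fin.elim0 :=
    fun h1 s p => h1 _ (minProper_proper s p)
  have h31 : (∃ x, Isolated (pow A (∑ s : σ.symb, σ.ar s)) x) →
      ∀ φ : PH σ 0, φ.Proper → ¬ φ.Sat A Fin.elim0 :=
    fun ⟨_, hx⟩ => PH.not_sat_of_proper_of_isolated_pow hx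
  have h23 := exists_isolated_pow_of_not_sat_minProper A
  exact ⟨⟨h12, fun h2 => h31 (h23 h2)⟩, ⟨h23, fun h3 => h12 (h31 h3)⟩⟩

/-- For a finite structure `A` over a finite signature `σ`, the
following are equivalent: (1) `A` satisfies no proper positive Horn sentence;
(2) `A` satisfies none of the minimal proper positive Horn sentences; (3) the power
`A^{r(σ)}`, where `r(σ)` is the sum of the arities, contains an isolated element. -/
theorem no_proper_ph_tfae {σ : Signature} [Fintype σ.symb] {α : Type} [Finite α]
    (A : Struc σ α) :
    ((∀ φ : PH σ 0, φ.Proper → ¬ φ.Sat A Fin.elim0) ↔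
      (∀ s (p : Fin (σ.ar s)), ¬ (minProper s p).Sat A Fin.elim0)) ∧
    ((∀ s (p : Fin (σ.ar s)), ¬ (minProper s p).Sat A Fin.elim0) ↔
      (∃ x, Isolated (pow A (∑ s : σ.symb, σ.ar s)) x)) :=
  no_proper_ph_tfae_general A
end
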